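/- Let 𝒞 and 𝒟 be classes of graphs, and let T = I ∘ Γ_𝒰 ∘ C_k be a transduction with 𝒞 ⊆ T(𝒟). Assume that for every G ∈ 𝒞 there exists a graph H ∈ 𝒟 such that G ∈ T(H) and the vertex set of G (as a subset of the vertex set of C_k(H)) does not contain two clones of any vertex of H. Then 𝒞 ⊑°_FO 𝒟. -/

import Mathlib

open SimpleGraph

/-! ### Finite graphs and colored graphs -/

/-- A finite simple graph. -/
structure FGraph : Type 1 where
  V : Type
  [fin : Finite V]
  G : SimpleGraph V

attribute [instance] FGraph.fin

/-- A finite simple graph colored by `c` unary predicates. -/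
structure CGraph (c : ℕ) : Type 1 where
  V : Type
  [fin : Finite V]
  G : SimpleGraph V
  color : Fin c → Set V

attribute [instance] CGraph.fin

/-! ### First-order formulas over `c`-colored graphs -/

/-- First-order formulas in the language of graphs with `c` unary predicates,
with free variables among `Fin m`. -/
inductive Fml (c : ℕ) : ℕ → Type where
  | eq {m} : Fin m → Fin m → Fml c m
  | adj {m} : Fin m → Fin m → Fml c m
  | col {m} : Fin c → Fin m → Fml c m
  | not {m} : Fml c m → Fml c m
  | or {m} : Fml c m → Fml c m → Fml c m
  | ex {m} : Fml c (m + 1) → Fml c m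

/-- Satisfaction of a first-order formula in a colored graph. -/
def Fml.Sat {c : ℕ} (A : CGraph c) : {m : ℕ} → Fml c m → (Fin m → A.V) → Prop
  | _, .eq i j, v => v i = v j
  | _, .adj i j, v => A.G.Adj (v i) (v j)
  | _, .col i x, v => v x ∈ A.color i
  | _, .not φ, v => ¬ Fml.Sat A φ v
  | _, .or φ ψ, v => Fml.Sat A φ v ∨ Fml.Sat A ψ v
  | _, .ex φ, v => ∃ w : A.V, Fml.Sat A φ (Fin.snoc v w)

/-! ### Simple interpretations and transductions -/

/-- A simple interpretation of graphs in `c`-colored graphs: a pair of formulas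
`(ν(x), η(x,y))` with `η` symmetric and anti-reflexive. -/
structure Interp (c : ℕ) where
  ν : Fml c 1
  η : Fml c 2
  symm : ∀ (A : CGraph c) (u v : A.V), Fml.Sat A η ![u, v] → Fml.Sat A η ![v, u]
  irrefl : ∀ (A : CGraph c) (v : A.V), ¬ Fml.Sat A η ![v, v]

/-- The graph interpreted in a colored graph. -/
def Interp.result {c : ℕ} (I : Interp c) (A : CGraph c) :
    SimpleGraph {v : A.V // Fml.Sat A I.ν ![v]} where
  Adj u v := Fml.Sat A I.η ![u.1, v.1]
  symm := ⟨fun u v h => I.symm A u.1 v.1 h⟩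
  loopless := ⟨fun v h => I.irrefl A v.1 h⟩

/-- The `k`-copy operation on graphs: the copies of a vertex form a clique, and copies
with the same index are adjacent iff the original vertices are. -/
def copyGraph {V : Type} (G : SimpleGraph V) (k : ℕ) : SimpleGraph (V × Fin k) where
  Adj a b := (a.1 = b.1 ∧ a.2 ≠ b.2) ∨ (G.Adj a.1 b.1 ∧ a.2 = b.2)
  symm := by
    constructor
    rintro a b (⟨h1, h2⟩ | ⟨h1, h2⟩)
    · exact Or.inl ⟨h1.symm, h2.symm⟩
    · exact Or.inr ⟨h1.symm, h2.symm⟩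
  loopless := by
    constructor
    rintro a (⟨_, h⟩ | ⟨h, _⟩)
    · exact h rfl
    · exact G.loopless.irrefl _ h

/-- The `k`-copy operation on finite graphs. -/
def FGraph.copy (G : FGraph) (k : ℕ) : FGraph where
  V := G.V × Fin k
  G := copyGraph G.G k

/-- A transduction: a composition `I ∘ Γ_𝒰 ∘ C_k` of a copy operation, a coloring
operation and a simple interpretation. -/
structure Transduction where
  k : ℕ
  kpos : 0 < k
  c : ℕ
  I : Interp c

/-- The colored graph obtained from `C_k(G)` by a choice of coloring. -/
def Transduction.copyCGraph (T : Transduction) (G : FGraph)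
    (color : Fin T.c → Set (G.V × Fin T.k)) : CGraph T.c where
  V := G.V × Fin T.k
  G := copyGraph G.G T.k
  color := color

/-- `H ∈ T(G)` (up to isomorphism). -/
def Transduction.mem (T : Transduction) (G H : FGraph) : Prop :=
  ∃ color : Fin T.c → Set (G.V × Fin T.k),
    Nonempty (H.G ≃g T.I.result (T.copyCGraph G color))

/-- The image `T(𝒟)` of a class of graphs under a transduction. -/
def TImage (T : Transduction) (D : Set FGraph) : Set FGraph :=
  {H | ∃ G ∈ D, T.mem G H}

/-- `𝒞 ⊑_FO 𝒟` : `𝒞` is a first-order transduction of `𝒟`. -/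
def SqFO (C D : Set FGraph) : Prop := ∃ T : Transduction, C ⊆ TImage T D

/-- `𝒞 ⊑°_FO 𝒟` : `𝒞` is a non-copying first-order transduction of `𝒟`. -/
def SqFOnc (C D : Set FGraph) : Prop := ∃ T : Transduction, T.k = 1 ∧ C ⊆ TImage T D

/-- `𝒞 ≡_FO 𝒟`. -/
def EquivFO (C D : Set FGraph) : Prop := SqFO C D ∧ SqFO D C

/-- `T'` subsumes `T` : `T'(G) ⊇ T(G)` for every graph `G`. -/
def Subsumes (T' T : Transduction) : Prop := ∀ G H : FGraph, T.mem G H → T'.mem G H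

/-! ### Perturbations -/

/-- The subset complementation `⊕M`: complement the adjacency between distinct
vertices that both belong to `M`. -/
def scompGraph {V : Type} (G : SimpleGraph V) (M : Set V) : SimpleGraph V where
  Adj u v := u ≠ v ∧ (G.Adj u v ↔ ¬(u ∈ M ∧ v ∈ M))
  symm := by
    constructor
    rintro u v ⟨h1, h2⟩
    refine ⟨h1.symm, ?_, ?_⟩
    · intro h hm
      exact (h2.mp (G.adj_symm h)) ⟨hm.2, hm.1⟩
    · intro h
      exact G.adj_symm (h2.mpr fun hm => h ⟨hm.2, hm.1⟩)
  loopless := ⟨fun v h => h.1 rfl⟩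

/-- Applying a finite sequence of subset complementations. -/
def perturbGraph {V : Type} : List (Set V) → SimpleGraph V → SimpleGraph V
  | [], G => G
  | M :: Ms, G => perturbGraph Ms (scompGraph G M)

/-- `H ∈ P(G)` for a perturbation `P` that is the composition of `p` subset
complementations (up to isomorphism). -/
def PerturbMem (p : ℕ) (G H : FGraph) : Prop :=
  ∃ Z : Fin p → Set G.V, Nonempty (H.G ≃g perturbGraph (List.ofFn Z) G.G)

/-- The image `P(𝒟)` of a class under a perturbation with `p` marks. -/
def PerturbImage (p : ℕ) (D : Set FGraph) : Set FGraph :=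
  {H | ∃ G ∈ D, PerturbMem p G H}

/-- `𝒞` is a perturbation of `𝒟`. -/
def IsPerturbationOfClass (C D : Set FGraph) : Prop := ∃ p, C ⊆ PerturbImage p D

/-! ### Locality -/

/-- The ball of radius `r` around a set `S` of vertices. -/
def ballSet {V : Type} (G : SimpleGraph V) (r : ℕ) (S : Set V) : Set V :=
  {v | ∃ u ∈ S, G.Reachable u v ∧ G.dist u v ≤ r}

lemma mem_ballSet_self {V : Type} (G : SimpleGraph V) (r : ℕ) {S : Set V} {v : V}
    (hv : v ∈ S) : v ∈ ballSet G r S :=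
  ⟨v, hv, Reachable.refl v, by rw [SimpleGraph.dist_self]; exact Nat.zero_le r⟩

/-- The colored subgraph induced on a set of vertices. -/
def CGraph.induce {c : ℕ} (A : CGraph c) (S : Set A.V) : CGraph c where
  V := ↥S
  G := A.G.induce S
  color := fun i => {v | (v : A.V) ∈ A.color i}

/-- A formula is `r`-local if its truth only depends on the subgraph induced by the
ball of radius `r` around its free variables. -/
def IsLocalFml {c m : ℕ} (r : ℕ) (φ : Fml c m) : Prop :=
  ∀ (A : CGraph c) (v : Fin m → A.V),
    Fml.Sat A φ v ↔
      Fml.Sat (A.induce (ballSet A.G r (Set.range v))) φ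
        (fun i => ⟨v i, mem_ballSet_self A.G r (Set.mem_range_self i)⟩)

/-- A formula is strongly `r`-local if it is `r`-local and, whenever it holds of a
tuple, the entries of the tuple are pairwise at distance at most `r`. -/
def IsStronglyLocalFml {c m : ℕ} (r : ℕ) (φ : Fml c m) : Prop :=
  IsLocalFml r φ ∧
    ∀ (A : CGraph c) (v : Fin m → A.V), Fml.Sat A φ v →
      ∀ i j : Fin m, A.G.Reachable (v i) (v j) ∧ A.G.dist (v i) (v j) ≤ r

/-- An immersive transduction: non-copying, with strongly local formulas. -/
def Transduction.Immersive (T : Transduction) : Prop :=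
  T.k = 1 ∧ ∃ r : ℕ, IsStronglyLocalFml r T.I.ν ∧ IsStronglyLocalFml r T.I.η

/-! ### Graph classes -/

/-- A set of graphs closed under isomorphism. -/
def IsoClosed (C : Set FGraph) : Prop :=
  ∀ G H : FGraph, Nonempty (G.G ≃g H.G) → G ∈ C → H ∈ C

/-- `H` is (isomorphic to) an induced subgraph of `G`. -/
def IsInducedSubgraphOf (H G : FGraph) : Prop :=
  ∃ f : H.V → G.V, Function.Injective f ∧ ∀ u v, H.G.Adj u v ↔ G.G.Adj (f u) (f v)

/-- A hereditary class: closed under induced subgraphs. -/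
def HereditaryClass (C : Set FGraph) : Prop :=
  ∀ G ∈ C, ∀ H : FGraph, IsInducedSubgraphOf H G → H ∈ C

/-- `H` is (isomorphic to) a subgraph of `G`. -/
def IsSubgraphOf (H G : FGraph) : Prop :=
  ∃ f : H.V → G.V, Function.Injective f ∧ ∀ u v, H.G.Adj u v → G.G.Adj (f u) (f v)

/-- The monotone closure of a class: all subgraphs of its members. -/
def monotoneClosure (C : Set FGraph) : Set FGraph :=
  {H | ∃ G ∈ C, IsSubgraphOf H G}

/-- `G` contains `K_{t,t}` as a subgraph. -/
def HasKtt {V : Type} (G : SimpleGraph V) (t : ℕ) : Prop :=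
  ∃ a b : Fin t → V, Function.Injective a ∧ Function.Injective b ∧
    (∀ i j, a i ≠ b j) ∧ ∀ i j, G.Adj (a i) (b j)

/-- A weakly sparse class: some `K_{t,t}` is a subgraph of no member. -/
def WeaklySparse (C : Set FGraph) : Prop := ∃ t : ℕ, ∀ G ∈ C, ¬ HasKtt G.G t

/-- Disjoint union of two graphs. -/
def sumGraph {V W : Type} (G : SimpleGraph V) (H : SimpleGraph W) : SimpleGraph (V ⊕ W) where
  Adj a b := match a, b with
    | .inl u, .inl v => G.Adj u v
    | .inr u, .inr v => H.Adj u v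
    | _, _ => False
  symm := by
    constructor
    rintro (u | u) (v | v) h
    · exact G.adj_symm h
    · exact h.elim
    · exact h.elim
    · exact H.adj_symm h
  loopless := by
    constructor
    rintro (v | v) h
    · exact G.loopless.irrefl _ h
    · exact H.loopless.irrefl _ h

/-- Disjoint union of finite graphs. -/
def FGraph.disjUnion (G H : FGraph) : FGraph where
  V := G.V ⊕ H.V
  G := sumGraph G.G H.G

/-- An addable class: closed under disjoint unions. -/
def Addable (C : Set FGraph) : Prop :=
  ∀ G ∈ C, ∀ H ∈ C, FGraph.disjUnion G H ∈ C

/-- The degree of a vertex. -/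
noncomputable def degCard (G : FGraph) (v : G.V) : ℕ := Nat.card {u : G.V // G.G.Adj v u}

/-- A class with bounded maximum degree. -/
def BddDegree (C : Set FGraph) : Prop := ∃ D : ℕ, ∀ G ∈ C, ∀ v : G.V, degCard G v ≤ D
/-! ### Further graph constructions and parameters -/

/-- Auxiliary instance. -/
instance {α : Type} [Finite α] : Finite (Option α) :=
  Finite.of_equiv _ (Equiv.optionEquivSumPUnit.{0,0} α).symm

/-- Adding an apex vertex adjacent to all vertices. -/
def apexGraph {V : Type} (G : SimpleGraph V) : SimpleGraph (Option V) where
  Adj a b := match a, b with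
    | none, none => False
    | none, some _ => True
    | some _, none => True
    | some u, some v => G.Adj u v
  symm := by
    constructor
    rintro (_ | u) (_ | v) h
    · exact h.elim
    · trivial
    · trivial
    · exact G.adj_symm h
  loopless := by
    constructor
    rintro (_ | v) h
    · exact h.elim
    · exact G.loopless.irrefl _ h

/-- The class `𝒞 ∨ K₁` of graphs of `𝒞` with an added apex. -/
def JoinK1 (C : Set FGraph) : Set FGraph :=
  {H | ∃ G ∈ C, Nonempty (H.G ≃g apexGraph G.G)}

/-- The ball of radius `r` around a vertex, as a finite graph. -/
def ballFGraph (G : FGraph) (r : ℕ) (v : G.V) : FGraph where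
  V := ↥(ballSet G.G r {v})
  G := G.G.induce (ballSet G.G r {v})

/-- The class `𝓛_r(ℱ)` of all balls of radius `r` of graphs of `ℱ`. -/
def LocClass (r : ℕ) (F : Set FGraph) : Set FGraph :=
  {H | ∃ G ∈ F, ∃ v : G.V, Nonempty (H.G ≃g (ballFGraph G r v).G)}

/-- Adding a pendant vertex adjacent only to `v`. -/
def pendantGraph {V : Type} (G : SimpleGraph V) (v : V) : SimpleGraph (Option V) where
  Adj a b := match a, b with
    | none, none => False
    | none, some w => w = v
    | some u, none => u = v
    | some u, some w => G.Adj u w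
  symm := by
    constructor
    rintro (_ | u) (_ | w) h
    · exact h.elim
    · exact h
    · exact h
    · exact G.adj_symm h
  loopless := by
    constructor
    rintro (_ | w) h
    · exact h.elim
    · exact G.loopless.irrefl _ h

/-- The finite graph obtained by adding a pendant vertex at `v`. -/
def FGraph.addPendant (G : FGraph) (v : G.V) : FGraph where
  V := Option G.V
  G := pendantGraph G.G v

/-- `G` is obtained from `H` by adding at most `h` vertices, joined arbitrarily. -/
def NearlyOf (h : ℕ) (G H : FGraph) : Prop :=
  ∃ f : H.V → G.V, Function.Injective f ∧
    (∀ u v, H.G.Adj u v ↔ G.G.Adj (f u) (f v)) ∧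
    Nat.card {v : G.V // v ∉ Set.range f} ≤ h

/-- The class `𝒞` is nearly `𝒟`. -/
def Nearly (C D : Set FGraph) : Prop :=
  ∃ h : ℕ, ∀ G ∈ C, ∃ H ∈ D, NearlyOf h G H

/-- The class `ℰ` of all edgeless graphs. -/
def EdgelessClass : Set FGraph := {G | ∀ u v : G.V, ¬ G.G.Adj u v}

/-- All members of the class have connected components of bounded size. -/
def BddComponents (D : Set FGraph) : Prop :=
  ∃ n : ℕ, ∀ G ∈ D, ∀ v : G.V, Nat.card {u : G.V // G.G.Reachable v u} ≤ n

/-- The class of all cubic (3-regular) graphs. -/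
def CubicClass : Set FGraph := {G | ∀ v : G.V, degCard G v = 3}

/-- The class `𝒫` of all paths. -/
def PathClass : Set FGraph :=
  {G | ∃ n : ℕ, Nonempty (G.G ≃g SimpleGraph.pathGraph n)}

/-- The `ℓ`-th power of a graph: two vertices are adjacent iff their distance
is between `1` and `ℓ`. -/
def powGraph {V : Type} (G : SimpleGraph V) (ℓ : ℕ) : SimpleGraph V where
  Adj u v := u ≠ v ∧ G.Reachable u v ∧ G.dist u v ≤ ℓ
  symm := by
    constructor
    rintro u v ⟨h1, h2, h3⟩
    exact ⟨h1.symm, h2.symm, by rwa [SimpleGraph.dist_comm]⟩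
  loopless := ⟨fun v h => h.1 rfl⟩

/-- The bandwidth of `G` is at most `ℓ` : `G` is a subgraph of the `ℓ`-th power
of a path. -/
def BandwidthLE (G : FGraph) (ℓ : ℕ) : Prop :=
  ∃ n : ℕ, ∃ f : G.V → Fin n, Function.Injective f ∧
    ∀ u v, G.G.Adj u v → (powGraph (SimpleGraph.pathGraph n) ℓ).Adj (f u) (f v)

/-- A class with bounded bandwidth. -/
def BddBandwidth (D : Set FGraph) : Prop := ∃ ℓ : ℕ, ∀ G ∈ D, BandwidthLE G ℓ

/-- The class of all cubic trees: trees all of whose vertices have degree 3 or 1. -/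
def CubicTreeClass : Set FGraph :=
  {G | G.G.IsTree ∧ ∀ v : G.V, degCard G v = 3 ∨ degCard G v = 1}

/-- `H` contains a clique on `s` vertices. -/
def HasCliqueN {V : Type} (H : SimpleGraph V) (s : ℕ) : Prop :=
  ∃ f : Fin s → V, Function.Injective f ∧ ∀ i j, i ≠ j → H.Adj (f i) (f j)

/-- A chordal graph: no induced cycle of length at least 4. -/
def IsChordal {V : Type} (H : SimpleGraph V) : Prop :=
  ∀ n : ℕ, 4 ≤ n → ¬ ∃ f : Fin n → V, Function.Injective f ∧
    ∀ i j, (SimpleGraph.cycleGraph n).Adj i j ↔ H.Adj (f i) (f j)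

/-- `tw(G) ≤ n` : `G` is a subgraph of a chordal graph with clique number at most `n+1`. -/
def TreewidthLE (G : FGraph) (n : ℕ) : Prop :=
  ∃ H : SimpleGraph G.V, IsChordal H ∧ G.G ≤ H ∧ ¬ HasCliqueN H (n + 2)

/-- A class with bounded treewidth. -/
def BddTreewidth (D : Set FGraph) : Prop := ∃ n : ℕ, ∀ G ∈ D, TreewidthLE G n

/-- An interval graph: the intersection graph of a family of real intervals. -/
def IsIntervalGraph {V : Type} (H : SimpleGraph V) : Prop :=
  ∃ l r : V → ℝ, (∀ v, l v ≤ r v) ∧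
    ∀ u v, u ≠ v → (H.Adj u v ↔ (l u ≤ r v ∧ l v ≤ r u))

/-- `pw(G) ≤ n` : `G` is a subgraph of an interval graph with clique number at
most `n+1`. -/
def PathwidthLE (G : FGraph) (n : ℕ) : Prop :=
  ∃ H : SimpleGraph G.V, IsIntervalGraph H ∧ G.G ≤ H ∧ ¬ HasCliqueN H (n + 2)

/-- The class `𝒫𝒲_n` of all graphs of pathwidth at most `n`. -/
def PWClass (n : ℕ) : Set FGraph := {G | PathwidthLE G n}

/-- `G` is a forest of depth at most `n` : it is acyclic and roots may be chosen,
one in each connected component, such that every vertex is at distance at most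
`n - 1` from the root of its component. -/
def ForestDepthLE (n : ℕ) (G : FGraph) : Prop :=
  G.G.IsAcyclic ∧ ∃ ρ : G.V → G.V,
    (∀ v, G.G.Reachable (ρ v) v ∧ G.G.dist (ρ v) v ≤ n - 1) ∧
    ∀ u v, G.G.Reachable u v → ρ u = ρ v

/-- The class `𝒯_n` of forests of depth at most `n`. -/
def TreeDepthClass (n : ℕ) : Set FGraph := {G | ForestDepthLE n G}

/-- A star forest: an acyclic graph with no path on four distinct vertices. -/
def IsStarForest (G : FGraph) : Prop :=
  G.G.IsAcyclic ∧ ∀ a b c d : G.V, G.G.Adj a b → G.G.Adj b c → G.G.Adj c d →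
    a = c ∨ b = d ∨ a = d

/-- The class `𝒯₂` of all star forests. -/
def StarForestClass : Set FGraph := {G | IsStarForest G}

/-- `H` is a depth-`r` shallow minor of `G` : it is obtained by contracting
pairwise disjoint connected subgraphs of radius at most `r` and deleting
vertices and edges. -/
def IsShallowMinor (r : ℕ) (H G : FGraph) : Prop :=
  ∃ φ : H.V → Set G.V,
    (∀ v, (φ v).Nonempty) ∧
    (∀ u v, u ≠ v → Disjoint (φ u) (φ v)) ∧
    (∀ v : H.V, ∃ c : ↥(φ v), ∀ u : ↥(φ v),
      (G.G.induce (φ v)).Reachable c u ∧ (G.G.induce (φ v)).dist c u ≤ r) ∧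
    (∀ u v : H.V, H.G.Adj u v → ∃ a ∈ φ u, ∃ b ∈ φ v, G.G.Adj a b)

/-- The average degree of `H` is at most `d`. -/
def AvgDegLE (H : FGraph) (d : ℕ) : Prop :=
  2 * Nat.card H.G.edgeSet ≤ d * Nat.card H.V

/-- A class of bounded expansion: for some `f : ℕ → ℕ`, every depth-`r` shallow
minor of a member has average degree at most `f r`. -/
def BoundedExpansion (C : Set FGraph) : Prop :=
  ∃ f : ℕ → ℕ, ∀ r : ℕ, ∀ G ∈ C, ∀ H : FGraph, IsShallowMinor r H G → AvgDegLE H (f r)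

/-- A proper coloring `f` of `G` with `n` colors is a star coloring if no path on
four vertices receives only two colors. -/
def IsStarColoring {V : Type} (G : SimpleGraph V) (n : ℕ) (f : V → Fin n) : Prop :=
  (∀ u v, G.Adj u v → f u ≠ f v) ∧
  ∀ a b c d, G.Adj a b → G.Adj b c → G.Adj c d → a ≠ c → b ≠ d → a ≠ d →
    ¬ (f a = f c ∧ f b = f d)

/-- A class with bounded star chromatic number. -/
def BddStarChrom (C : Set FGraph) : Prop :=
  ∃ n : ℕ, ∀ G ∈ C, ∃ f : G.V → Fin n, IsStarColoring G.G n f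

/-! ### The statement -/


/-! The colored graph `C_k(H)⁺` is simulated on `H` itself with `c·k + k` colors: one for each original
color on each clone index, and one per index `i` marking the vertices whose `i`-th clone
survives `ν`. A formula about clones becomes a formula about `H` by fixing the clone index of
every variable, a quantifier over clones becoming a disjunction over the `k` indices. When at most
one clone of each vertex survives, the marks determine that clone, so projecting to `H` is an
isomorphism of the interpreted graphs. -/

section ColorCode

variable {c k : ℕ}

/-- The colors of `C_k(H)` are moved onto `H`: color `j` on clone `i` becomes color
`copyColor j i`, and `cloneColor i` marks the vertices whose `i`-th clone is kept. -/
def colorCode : Fin c × Fin k ⊕ Fin k ≃ Fin (c * k + k) :=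
  (Equiv.sumCongr finProdFinEquiv (Equiv.refl _)).trans finSumFinEquiv

def copyColor (j : Fin c) (i : Fin k) : Fin (c * k + k) := colorCode (.inl (j, i))

def cloneColor (i : Fin k) : Fin (c * k + k) := colorCode (.inr i)

def foldColors {W : Type} (color : Fin c → Set (W × Fin k)) (kept : Fin k → Set W) :
    Fin (c * k + k) → Set W :=
  fun n => Sum.elim (fun p => {u | (u, p.2) ∈ color p.1}) kept (colorCode.symm n)

@[simp]
lemma foldColors_copyColor {W : Type} (color : Fin c → Set (W × Fin k))
    (kept : Fin k → Set W) (j : Fin c) (i : Fin k) :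
    foldColors color kept (copyColor j i) = {u | (u, i) ∈ color j} := by
  simp [foldColors, copyColor]

@[simp]
lemma foldColors_cloneColor {W : Type} (color : Fin c → Set (W × Fin k))
    (kept : Fin k → Set W) (i : Fin k) :
    foldColors color kept (cloneColor i) = kept i := by
  simp [foldColors, cloneColor]

end ColorCode

def coloredCopy {W : Type} [Finite W] {c k : ℕ} (G : SimpleGraph W)
    (color : Fin c → Set (W × Fin k)) : CGraph c where
  V := W × Fin k
  G := copyGraph G k
  color := color

def copyGraphOneIso {W : Type} (G : SimpleGraph W) : copyGraph G 1 ≃g G where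
  toFun := Prod.fst
  invFun u := (u, 0)
  left_inv x := Prod.ext rfl (Subsingleton.elim _ _)
  right_inv _ := rfl
  map_rel_iff' := by simp [copyGraph, Subsingleton.elim _ (0 : Fin 1)]

namespace Fml

variable {c : ℕ}

def falsum {m : ℕ} : Fml c m := .ex (.not (.eq (Fin.last m) (Fin.last m)))

def and {m : ℕ} (φ ψ : Fml c m) : Fml c m := .not (.or (.not φ) (.not ψ))

def iOr {m : ℕ} : {k : ℕ} → (Fin k → Fml c m) → Fml c m
  | 0, _ => falsum
  | _ + 1, φ => .or (φ 0) (iOr fun i => φ i.succ)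

section Sat

variable (A : CGraph c) {m : ℕ}

@[simp]
lemma sat_falsum (v : Fin m → A.V) : ¬ Sat A falsum v := by
  rintro ⟨w, hw⟩
  exact hw rfl

@[simp]
lemma sat_and (φ ψ : Fml c m) (v : Fin m → A.V) :
    Sat A (φ.and ψ) v ↔ Sat A φ v ∧ Sat A ψ v := by
  simp [Fml.and, Sat]

@[simp]
lemma sat_iOr : ∀ {k : ℕ} (φ : Fin k → Fml c m) (v : Fin m → A.V),
    Sat A (iOr φ) v ↔ ∃ i, Sat A (φ i) v
  | 0, _, _ => by simp [iOr]
  | _ + 1, φ, v => by simp [iOr, Sat, sat_iOr, Fin.exists_fin_succ]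

@[simp]
lemma sat_col (j : Fin c) (x : Fin m) (v : Fin m → A.V) :
    Sat A (.col j x) v ↔ v x ∈ A.color j := Iff.rfl

end Sat

variable {k : ℕ}

/-- Evaluating a formula of `C_k(H)` at the clones `ι a` of vertices of `H`, as a formula
of `H` colored by `foldColors`. -/
def atClones : {m : ℕ} → Fml c m → (Fin m → Fin k) → Fml (c * k + k) m
  | _, .eq a b, ι => if ι a = ι b then .eq a b else falsum
  | _, .adj a b, ι => if ι a = ι b then .adj a b else .eq a b
  | _, .col j x, ι => .col (copyColor j (ι x)) x
  | _, .not φ, ι => .not (φ.atClones ι)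
  | _, .or φ ψ, ι => .or (φ.atClones ι) (ψ.atClones ι)
  | _, .ex φ, ι => iOr fun i => .ex (φ.atClones (Fin.snoc ι i))

lemma sat_atClones {W : Type} [Finite W] {G : SimpleGraph W} {color : Fin c → Set (W × Fin k)}
    (A : CGraph (c * k + k)) (ψ : A.G ≃g G)
    (hcol : ∀ j i x, x ∈ A.color (copyColor j i) ↔ (ψ x, i) ∈ color j) {m : ℕ}
    (φ : Fml c m) (ι : Fin m → Fin k) (w : Fin m → A.V) :
    Sat A (φ.atClones ι) w ↔ Sat (coloredCopy G color) φ (fun a => (ψ (w a), ι a)) := by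
  induction φ with
  | eq a b =>
    by_cases hι : ι a = ι b <;> simp [atClones, Sat, hι, coloredCopy]
  | adj a b =>
    by_cases hι : ι a = ι b <;> simp [atClones, Sat, hι, coloredCopy, copyGraph, ψ.map_adj_iff]
  | col j x => exact hcol _ _ _
  | not φ ih => exact not_congr (ih ι w)
  | or φ χ ih₁ ih₂ => exact or_congr (ih₁ ι w) (ih₂ ι w)
  | ex φ ih =>
    have hsnoc : ∀ u i, (Fin.snoc (fun a => (ψ (w a), ι a)) (ψ u, i) : Fin _ → W × Fin k) =
        fun a => (ψ (Fin.snoc (α := fun _ => A.V) w u a),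
          Fin.snoc (α := fun _ => Fin k) ι i a) := by
      intro u i
      funext a
      refine Fin.lastCases ?_ (fun b => ?_) a <;> simp
    simp only [atClones, sat_iOr, Sat, ih]
    change _ ↔ ∃ p : W × Fin k, _
    rw [Prod.exists, ψ.surjective.exists, exists_comm]
    exact exists_congr fun u => exists_congr fun i => iff_of_eq (congrArg _ (hsnoc u i).symm)

def uncopyAdj (η : Fml c 2) (k : ℕ) : Fml (c * k + k) 2 :=
  (Fml.not (.eq 0 1)).and <| iOr fun i => iOr fun j =>
    (Fml.col (cloneColor i) 0).and ((Fml.col (cloneColor j) 1).and (η.atClones ![i, j]))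

lemma sat_uncopyAdj {W : Type} [Finite W] {G : SimpleGraph W}
    {color : Fin c → Set (W × Fin k)} (A : CGraph (c * k + k)) (ψ : A.G ≃g G)
    (hcol : ∀ j i x, x ∈ A.color (copyColor j i) ↔ (ψ x, i) ∈ color j)
    (η : Fml c 2) (u v : A.V) :
    Sat A (η.uncopyAdj k) ![u, v] ↔ u ≠ v ∧ ∃ i j, u ∈ A.color (cloneColor i) ∧
      v ∈ A.color (cloneColor j) ∧ Sat (coloredCopy G color) η ![(ψ u, i), (ψ v, j)] := by
  have hpair : ∀ i j : Fin k,
      (fun a => (ψ (![u, v] a), ![i, j] a)) = ![(ψ u, i), (ψ v, j)] := by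
    intro i j
    funext a
    fin_cases a <;> rfl
  simp only [uncopyAdj, sat_and, sat_iOr, sat_col, sat_atClones A ψ hcol, hpair]
  rfl

end Fml

def Interp.uncopy {c : ℕ} (I : Interp c) (k : ℕ) : Interp (c * k + k) where
  ν := Fml.iOr fun i => .col (cloneColor i) 0
  η := I.η.uncopyAdj k
  symm A u v := by
    -- symmetry must hold in every colored graph, so read `A` itself as a coded copy graph
    let color : Fin c → Set (A.V × Fin k) := fun j => {p | p.1 ∈ A.color (copyColor j p.2)}
    simp only [Fml.sat_uncopyAdj A (Iso.refl (G := A.G)) (color := color) fun _ _ _ => Iff.rfl]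
    rintro ⟨hne, i, j, hu, hv, hη⟩
    exact ⟨hne.symm, j, i, hv, hu, I.symm _ _ _ hη⟩
  irrefl _ _ h := ((Fml.sat_and _ _ _ _).1 h).1 rfl

namespace Transduction

def uncopy (T : Transduction) : Transduction where
  k := 1
  kpos := Nat.one_pos
  c := T.c * T.k + T.k
  I := T.I.uncopy T.k

variable (T : Transduction) (H : FGraph) (color : Fin T.c → Set (H.V × Fin T.k))

def keptClones (i : Fin T.k) : Set H.V := {u | Fml.Sat (T.copyCGraph H color) T.I.ν ![(u, i)]}

def uncopyColor : Fin T.uncopy.c → Set (H.V × Fin T.uncopy.k) :=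
  fun n => Prod.fst ⁻¹' foldColors color (T.keptClones H color) n

local notation "X" => T.copyCGraph H color
local notation "B" => T.uncopy.copyCGraph H (T.uncopyColor H color)

lemma mem_uncopyColor_copyColor (j : Fin T.c) (i : Fin T.k) (x : H.V × Fin 1) :
    x ∈ (B).color (copyColor j i) ↔ (x.1, i) ∈ color j := by
  show x.1 ∈ foldColors color _ (copyColor j i) ↔ _
  rw [foldColors_copyColor]
  rfl

lemma mem_uncopyColor_cloneColor (i : Fin T.k) (x : H.V × Fin 1) :
    x ∈ (B).color (cloneColor i) ↔ x.1 ∈ T.keptClones H color i := by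
  show x.1 ∈ foldColors color _ (cloneColor i) ↔ _
  rw [foldColors_cloneColor]

lemma sat_uncopy_ν (x : H.V × Fin 1) :
    Fml.Sat B T.uncopy.I.ν ![x] ↔ ∃ i, x.1 ∈ T.keptClones H color i :=
  (Fml.sat_iOr B _ _).trans (exists_congr fun i => mem_uncopyColor_cloneColor T H color i x)

lemma sat_uncopy_η (x y : H.V × Fin 1) :
    Fml.Sat B T.uncopy.I.η ![x, y] ↔ x ≠ y ∧ ∃ i j, x.1 ∈ T.keptClones H color i ∧
      y.1 ∈ T.keptClones H color j ∧ Fml.Sat X T.I.η ![(x.1, i), (y.1, j)] :=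
  (Fml.sat_uncopyAdj B (copyGraphOneIso H.G) (mem_uncopyColor_copyColor T H color) T.I.η x y).trans
    (and_congr_right' <| exists₂_congr fun i j => and_congr (mem_uncopyColor_cloneColor T H color i x)
      (and_congr_left' (mem_uncopyColor_cloneColor T H color j y)))

lemma uncopy_mem_of_injective {G : FGraph} (e : G.G ≃g T.I.result X)
    (hinj : Function.Injective fun v => (e v).1.1) : T.uncopy.mem H G := by
  have hkept : ∀ v i, (e v).1.1 ∈ T.keptClones H color i ↔ i = (e v).1.2 := by
    refine fun v i => ⟨fun hi => ?_, fun hi => hi ▸ (e v).2⟩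
    have hv : e.symm ⟨((e v).1.1, i), hi⟩ = v := hinj (by simp)
    simpa using congrArg (fun v => (e v).1.2) hv
  let F : G.V → H.V × Fin 1 := fun v => ((e v).1.1, 0)
  have hF : ∀ v w, F v = F w ↔ v = w := fun v w =>
    ⟨fun h => hinj (Prod.ext_iff.1 h).1, fun h => h ▸ rfl⟩
  have hν : ∀ v, Fml.Sat B T.uncopy.I.ν ![F v] :=
    fun v => (T.sat_uncopy_ν H color _).2 ⟨_, (hkept v _).2 rfl⟩
  refine ⟨T.uncopyColor H color, ⟨⟨Equiv.ofBijective (fun v => ⟨F v, hν v⟩) ⟨?_, ?_⟩, ?_⟩⟩⟩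
  · exact fun v w h => (hF v w).1 (congrArg Subtype.val h)
  · rintro ⟨x, hx⟩
    obtain ⟨i, hi⟩ := (T.sat_uncopy_ν H color x).1 hx
    refine ⟨e.symm ⟨(x.1, i), hi⟩, Subtype.ext (Prod.ext ?_ (Subsingleton.elim (α := Fin 1) _ _))⟩
    simp [F]
  · intro v w
    change Fml.Sat B T.uncopy.I.η ![F v, F w] ↔ G.G.Adj v w
    refine (T.sat_uncopy_η H color _ _).trans (Iff.trans ?_ e.map_rel_iff)
    constructor
    · rintro ⟨-, i, j, hi, hj, h⟩
      obtain rfl := (hkept v i).1 hi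
      obtain rfl := (hkept w j).1 hj
      exact h
    · intro h
      refine ⟨fun hvw => ?_, _, _, (hkept v _).2 rfl, (hkept w _).2 rfl, h⟩
      obtain rfl := (hF v w).1 hvw
      exact T.I.irrefl _ _ h

end Transduction

theorem elimination_of_copying_general (T : Transduction) (C D : Set FGraph)
    (h : ∀ G ∈ C, ∃ H ∈ D, ∃ color : Fin T.c → Set (H.V × Fin T.k),
      ∃ e : G.G ≃g T.I.result (T.copyCGraph H color),
        Function.Injective fun v : G.V => ((e v).1).1) :
    SqFOnc C D := by
  refine ⟨T.uncopy, rfl, fun G hG => ?_⟩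
  obtain ⟨H, hH, color, e, hinj⟩ := h G hG
  exact ⟨H, hH, T.uncopy_mem_of_injective H color e hinj⟩

theorem elimination_of_copying (T : Transduction) (C D : Set FGraph)
    (hCT : C ⊆ TImage T D)
    (h : ∀ G ∈ C, ∃ H ∈ D, ∃ color : Fin T.c → Set (H.V × Fin T.k),
      ∃ e : G.G ≃g T.I.result (T.copyCGraph H color),
        Function.Injective fun v : G.V => ((e v).1).1) :
    SqFOnc C D :=
  elimination_of_copying_general T C D h
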